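/- Let f₀ be a quintic form whose zero locus in ℙ⁴ is smooth, i.e., the only common zero in ℂ⁵ of the partial derivatives ∂f₀/∂z₀, …, ∂f₀/∂z₄ is the origin. Let c ∈ V_d be admissible with f₀∘c = 0, and suppose dim_ℂ T(f₀,c) = 4. Then c is an immersion: for every (s₀,u₀) ∈ ℂ² ∖ {0}, the vectors (∂c⁰/∂s(s₀,u₀), …, ∂c⁴/∂s(s₀,u₀)) and (∂c⁰/∂u(s₀,u₀), …, ∂c⁴/∂u(s₀,u₀)) are linearly independent in ℂ⁵. -/

import Mathlib

open MvPolynomial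

noncomputable section

/-- The space `V_d` of 5-tuples of homogeneous degree-`d` binary forms,
as a submodule of all 5-tuples of polynomials in two variables. -/
def VdSub (d : ℕ) : Submodule ℂ (Fin 5 → MvPolynomial (Fin 2) ℂ) :=
  Submodule.pi Set.univ (fun _ => homogeneousSubmodule (Fin 2) ℂ d)

/-- The vector `(c⁰(v), …, c⁴(v)) ∈ ℂ⁵` obtained by evaluating a 5-tuple at `v ∈ ℂ²`. -/
def ImageVec (c : Fin 5 → MvPolynomial (Fin 2) ℂ) (v : Fin 2 → ℂ) : Fin 5 → ℂ :=
  fun i => eval v (c i)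

/-- The induced map `ℙ¹ → ℙ⁴` is injective outside a finite subset of `ℙ¹(ℂ)`. -/
def GenericallyInjective (c : Fin 5 → MvPolynomial (Fin 2) ℂ) : Prop :=
  ∃ S : Set (Projectivization ℂ (Fin 2 → ℂ)), S.Finite ∧
    ∀ (v w : Fin 2 → ℂ) (hv : v ≠ 0) (hw : w ≠ 0),
      Projectivization.mk ℂ v hv ∉ S → Projectivization.mk ℂ w hw ∉ S →
      (∃ lam : ℂ, lam ≠ 0 ∧ ImageVec c w = lam • ImageVec c v) →
      ∃ mu : ℂ, mu ≠ 0 ∧ w = mu • v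

/-- `c` is admissible: a tuple of degree-`d` forms with no common zero on `ℂ² ∖ {0}`,
inducing a map `ℙ¹ → ℙ⁴` that is injective outside a finite set. -/
def Admissible (d : ℕ) (c : Fin 5 → MvPolynomial (Fin 2) ℂ) : Prop :=
  c ∈ VdSub d ∧ (∀ v : Fin 2 → ℂ, v ≠ 0 → ImageVec c v ≠ 0) ∧ GenericallyInjective c

/-- A quintic form: a nonzero homogeneous polynomial of degree 5 in `z₀, …, z₄`. -/
def IsQuintic (f : MvPolynomial (Fin 5) ℂ) : Prop :=
  f ≠ 0 ∧ f.IsHomogeneous 5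

/-- Evaluation of a polynomial `P` in the coefficients of a quintic form;
the nonvanishing locus of a (nonzero homogeneous) `P` is a basic Zariski-open subset of the
projective space of quintic forms. -/
def coeffEval (P : MvPolynomial ((Fin 5) →₀ ℕ) ℂ) (f : MvPolynomial (Fin 5) ℂ) : ℂ :=
  eval (fun m => coeff m f) P

/-- The linear map `L(α) = Σ_i α_i · ((∂f/∂z_i)∘c)`. -/
def Lmap (f : MvPolynomial (Fin 5) ℂ) (c : Fin 5 → MvPolynomial (Fin 2) ℂ) :
    (Fin 5 → MvPolynomial (Fin 2) ℂ) →ₗ[ℂ] MvPolynomial (Fin 2) ℂ where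
  toFun α := ∑ i, α i * aeval c (pderiv i f)
  map_add' a b := by simp [add_mul, Finset.sum_add_distrib]
  map_smul' r a := by simp [Finset.smul_sum, smul_mul_assoc]

/-- The Zariski tangent space `T(f,c) = {α ∈ V_d : Σ_i α_i · ((∂f/∂z_i)∘c) = 0}`. -/
def Tspace (d : ℕ) (f : MvPolynomial (Fin 5) ℂ) (c : Fin 5 → MvPolynomial (Fin 2) ℂ) :
    Submodule ℂ (Fin 5 → MvPolynomial (Fin 2) ℂ) :=
  VdSub d ⊓ LinearMap.ker (Lmap f c)

/-- The tangent space `{α ∈ V_d : ∃ ε, L(α) + Σ_j ε_j • g_j = 0}` of a projected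
incidence scheme, for a finite family `g` of binary forms. -/
def tangentFam (d : ℕ) (f : MvPolynomial (Fin 5) ℂ) (c : Fin 5 → MvPolynomial (Fin 2) ℂ)
    {n : ℕ} (g : Fin n → MvPolynomial (Fin 2) ℂ) :
    Submodule ℂ (Fin 5 → MvPolynomial (Fin 2) ℂ) where
  carrier := {α | α ∈ VdSub d ∧ ∃ ε : Fin n → ℂ, Lmap f c α + ∑ j, ε j • g j = 0}
  zero_mem' := ⟨Submodule.zero_mem _, fun _ => 0, by simp⟩
  add_mem' := by
    rintro a b ⟨ha, εa, ea⟩ ⟨hb, εb, eb⟩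
    refine ⟨Submodule.add_mem _ ha hb, εa + εb, ?_⟩
    have h1 : (∑ j, (εa + εb) j • g j) = (∑ j, εa j • g j) + ∑ j, εb j • g j := by
      simp [add_smul, Finset.sum_add_distrib]
    rw [map_add, h1, add_add_add_comm, ea, eb, add_zero]
  smul_mem' := by
    rintro r a ⟨ha, ε, e⟩
    refine ⟨Submodule.smul_mem _ r ha, r • ε, ?_⟩
    have h1 : (∑ j, (r • ε) j • g j) = r • ∑ j, ε j • g j := by
      simp [Finset.smul_sum, mul_smul]
    rw [map_smul, h1, ← smul_add, e, smul_zero]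

/-- `c` is an immersion: at every point of `ℂ² ∖ {0}` the two partial-derivative
vectors in `ℂ⁵` are linearly independent. -/
def IsImmersion (c : Fin 5 → MvPolynomial (Fin 2) ℂ) : Prop :=
  ∀ v : Fin 2 → ℂ, v ≠ 0 →
    LinearIndependent ℂ
      ![fun i => eval v (pderiv (0 : Fin 2) (c i)), fun i => eval v (pderiv (1 : Fin 2) (c i))]

/-!
If `c` is not an immersion at `v`, then `a ∂₀c(v) + b ∂₁c(v) = 0` for some `(a, b) ≠ 0`. The tuple
`φ = a ∂₀c + b ∂₁c` is tangent to the incidence scheme (differentiate `f₀ ∘ c = 0`) and vanishes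
at `v`, so `φ = l ψ` with `l` the linear form vanishing at `v`, and `X_j² ψ` is again a tangent
vector. On the other hand the infinitesimal reparametrizations `P₀ ∂₀c + P₁ ∂₁c`, with `P₀, P₁`
linear forms, already fill a 4-dimensional subspace of `T(f₀,c)`: `∂₀c` and `∂₁c` satisfy no
polynomial relation, since by Euler's identity such a relation would make all Wronskians
`c_i ∂₀c_j - c_j ∂₀c_i` vanish, so that `c` would be projectively constant, against generic
injectivity. Hence `X_j² ψ = P₀ ∂₀c + P₁ ∂₁c`, and comparing with `X_j² φ = l X_j² ψ` gives
`X_j² a = l P₀` and `X_j² b = l P₁`; evaluating at `v`, where `l` vanishes and `X_j` does not,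
yields `a = b = 0`.
-/

theorem Derivation.map_mvPolynomial_aeval {R A M σ : Type*} [CommSemiring R] [CommSemiring A]
    [Algebra R A] [AddCommMonoid M] [Module A M] [Module R M] [IsScalarTower R A M] [Fintype σ]
    (D : Derivation R A M) (x : σ → A) (p : MvPolynomial σ R) :
    D (aeval x p) = ∑ i, aeval x (pderiv i p) • D (x i) := by
  classical
  induction p using MvPolynomial.induction_on with
  | C a => simp
  | add p q hp hq => simp [hp, hq, add_smul, Finset.sum_add_distrib]
  | mul_X p j hp =>
    simp [Derivation.leibniz, hp, pderiv_X, Pi.single_apply, add_smul, Finset.sum_add_distrib,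
      mul_smul, Finset.smul_sum, apply_ite (aeval x), ite_smul]

theorem Polynomial.exists_eq_C_mul_of_wronskian_eq_zero {K : Type*} [Field K] [CharZero K]
    {f g : Polynomial K} (hg : g ≠ 0) (hW : f.wronskian g = 0) : ∃ t, f = Polynomial.C t * g := by
  classical
  -- after dividing out the gcd, a vanishing Wronskian forces both cofactors to be constant
  obtain ⟨f', g', hf, hg', hu⟩ := extract_gcd f g
  set e := gcd f g
  clear_value e
  have he : e ≠ 0 := fun h => hg (by rw [hg', h, zero_mul])
  have hW' : f'.wronskian g' = 0 := by
    have : f.wronskian g = e ^ 2 * f'.wronskian g' := by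
      conv_lhs => rw [hf, hg']
      simp only [Polynomial.wronskian, Polynomial.derivative_mul]
      ring
    simpa [this, he] using hW
  obtain ⟨hf', hg''⟩ :=
    ((gcd_isUnit_iff_isRelPrime.mp hu).isCoprime.wronskian_eq_zero_iff).mp hW'
  rw [Polynomial.eq_C_of_derivative_eq_zero hf'] at hf
  rw [Polynomial.eq_C_of_derivative_eq_zero hg''] at hg'
  have hb : g'.coeff 0 ≠ 0 := fun h => hg (by rw [hg', h, map_zero, mul_zero])
  refine ⟨f'.coeff 0 / g'.coeff 0, ?_⟩
  rw [hf, hg', ← mul_assoc, mul_comm (Polynomial.C _), mul_assoc, ← map_mul, div_mul_cancel₀ _ hb]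

namespace MvPolynomial

variable {R σ : Type*} [CommSemiring R]

theorem IsHomogeneous.aeval_smul {A : Type*} [CommSemiring A] [Algebra R A] {φ : MvPolynomial σ R}
    {n : ℕ} (hφ : φ.IsHomogeneous n) (a : A) (x : σ → A) :
    MvPolynomial.aeval (a • x) φ = a ^ n * MvPolynomial.aeval x φ := by
  induction hφ using IsWeightedHomogeneous.induction_on with
  | zero => simp
  | add p q _ _ hp hq => simp [hp, hq, mul_add]
  | monomial d r hr =>
    simp only [aeval_monomial, Finsupp.prod, Pi.smul_apply, smul_eq_mul, mul_pow,
      Finset.prod_mul_distrib, Finset.prod_pow_eq_pow_sum]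
    rw [← hr, Finsupp.weight_apply, Finsupp.sum]
    simp only [Pi.one_apply, smul_eq_mul, mul_one]
    ring

theorem IsHomogeneous.eq_zero_of_eval_eq_zero {p : MvPolynomial σ R} (hp : p.IsHomogeneous 0)
    {x : σ → R} (h : eval x p = 0) : p = 0 := by
  rw [totalDegree_eq_zero_iff_eq_C.mp ((totalDegree_zero_iff_isHomogeneous _).mpr hp)] at h ⊢
  rw [eval_C] at h
  rw [h, map_zero]

theorem aeval_sub_aeval_mem {A : Type*} [CommRing A] [Algebra R A] {I : Ideal A} {x y : σ → A}
    (h : ∀ i, x i - y i ∈ I) (p : MvPolynomial σ R) : aeval x p - aeval y p ∈ I := by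
  rw [← Ideal.Quotient.eq, ← Ideal.Quotient.mkₐ_eq_mk R, comp_aeval_apply, comp_aeval_apply]
  congr 2
  ext i
  exact Ideal.Quotient.eq.mpr (h i)

attribute [local instance] MvPolynomial.gradedAlgebra in
theorem IsHomogeneous.exists_eq_mul_of_dvd {l h : MvPolynomial σ R} {n : ℕ}
    (hl : l.IsHomogeneous 1) (hh : h.IsHomogeneous (n + 1)) (hdvd : l ∣ h) :
    ∃ e, e.IsHomogeneous n ∧ h = l * e := by
  obtain ⟨e, rfl⟩ := hdvd
  refine ⟨homogeneousComponent n e, homogeneousComponent_isHomogeneous n e, ?_⟩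
  have h := DirectSum.coe_decompose_mul_of_left_mem_of_le (homogeneousSubmodule σ R) (b := e) hl
    (Nat.le_add_left 1 n)
  simp only [show ∀ (x : MvPolynomial σ R) i,
    (DirectSum.decompose (homogeneousSubmodule σ R) x i : _) = homogeneousComponent i x
    from decomposition.decompose'_apply] at h
  rwa [homogeneousComponent_of_mem hh, if_pos rfl, Nat.add_sub_cancel] at h

theorem derivative_aeval_X_one (p : MvPolynomial (Fin 2) R) :
    Polynomial.derivative (aeval ![(Polynomial.X : Polynomial R), 1] p) =
      aeval ![Polynomial.X, 1] (pderiv 0 p) := by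
  rw [← Polynomial.derivative'_apply, Derivation.map_mvPolynomial_aeval]
  simp

theorem eval_aeval_X_one (x : R) (p : MvPolynomial (Fin 2) R) :
    (aeval ![(Polynomial.X : Polynomial R), 1] p).eval x = eval ![x, 1] p := by
  induction p using MvPolynomial.induction_on with
  | C a => simp
  | add p q hp hq => simp [hp, hq]
  | mul_X p i hp => fin_cases i <;> simp [hp]

theorem aeval_X_one_ne_zero {g : MvPolynomial (Fin 2) R} {n : ℕ} (hg : g.IsHomogeneous n)
    (hg0 : g ≠ 0) : aeval ![(Polynomial.X : Polynomial R), 1] g ≠ 0 := fun h0 => hg0 <| by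
  rw [← Polynomial.homogenize_eq_of_isHomogeneous hg rfl, h0, Polynomial.homogenize_zero]

variable {K : Type*} [Field K]

theorem exists_eq_C_mul_of_mul_pderiv_eq [CharZero K] {g h : MvPolynomial (Fin 2) K} {n : ℕ}
    (hg : g.IsHomogeneous n) (hh : h.IsHomogeneous n) (hg0 : g ≠ 0)
    (hW : h * pderiv 0 g = g * pderiv 0 h) : ∃ t, h = C t * g := by
  obtain ⟨t, ht⟩ := Polynomial.exists_eq_C_mul_of_wronskian_eq_zero
      (f := aeval ![Polynomial.X, 1] h) (aeval_X_one_ne_zero hg hg0) <| by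
    rw [Polynomial.wronskian, derivative_aeval_X_one, derivative_aeval_X_one, ← map_mul, ← map_mul,
      hW, mul_comm g, sub_self]
  refine ⟨t, ?_⟩
  rw [← Polynomial.homogenize_eq_of_isHomogeneous hh rfl, ht, Polynomial.homogenize_C_mul,
    Polynomial.homogenize_eq_of_isHomogeneous hg rfl]

def vanishingForm (v : Fin 2 → K) : MvPolynomial (Fin 2) K := C (v 1) * X 0 - C (v 0) * X 1

theorem isHomogeneous_vanishingForm (v : Fin 2 → K) : (vanishingForm v).IsHomogeneous 1 :=
  ((isHomogeneous_X K 0).C_mul _).sub ((isHomogeneous_X K 1).C_mul _)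

@[simp]
theorem eval_vanishingForm (v : Fin 2 → K) : eval v (vanishingForm v) = 0 := by
  simp [vanishingForm, mul_comm]

theorem vanishingForm_ne_zero {v : Fin 2 → K} (hv : v ≠ 0) : vanishingForm v ≠ 0 := by
  contrapose! hv
  ext i
  fin_cases i
  · simpa [vanishingForm] using congrArg (eval ![0, -1]) hv
  · simpa [vanishingForm] using congrArg (eval ![1, 0]) hv

theorem vanishingForm_dvd {h : MvPolynomial (Fin 2) K} {n : ℕ} (hh : h.IsHomogeneous n)
    {v : Fin 2 → K} (hv : v ≠ 0) (h0 : eval v h = 0) : vanishingForm v ∣ h := by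
  obtain ⟨j, hj⟩ := Function.ne_iff.mp hv
  -- modulo `vanishingForm v`, `v j • X ≡ X j • v`; by homogeneity `v j ^ n * h ≡ X j ^ n * h(v)`
  have key := aeval_sub_aeval_mem (I := Ideal.span {vanishingForm v})
    (x := (C (v j) : MvPolynomial (Fin 2) K) • X) (y := (X j : MvPolynomial (Fin 2) K) • (C ∘ v))
    ?_ h
  · rw [hh.aeval_smul, hh.aeval_smul, aeval_X_left_apply, aeval_C_comp_left,
      show aeval v h = 0 from h0, map_zero, mul_zero, sub_zero, Ideal.mem_span_singleton,
      ← map_pow] at key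
    exact (IsUnit.dvd_mul_left ((pow_ne_zero n hj).isUnit.map C)).mp key
  · intro i
    rw [Ideal.mem_span_singleton]
    fin_cases i <;> fin_cases j
    · simp [mul_comm]
    · exact ⟨1, by simp [vanishingForm]; ring⟩
    · exact ⟨-1, by simp [vanishingForm]; ring⟩
    · simp [mul_comm]

end MvPolynomial

theorem mem_VdSub_iff {d : ℕ} {c : Fin 5 → MvPolynomial (Fin 2) ℂ} :
    c ∈ VdSub d ↔ ∀ i, (c i).IsHomogeneous d := by
  simp [VdSub, Submodule.mem_pi, mem_homogeneousSubmodule]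

theorem not_genericallyInjective_C_mul {g : MvPolynomial (Fin 2) ℂ} {n : ℕ}
    (hg : g.IsHomogeneous n) (hg0 : g ≠ 0) (t : Fin 5 → ℂ) :
    ¬ GenericallyInjective fun i => C (t i) * g := by
  rintro ⟨S, hS, hinj⟩
  -- all points `[x : 1]` with `g(x, 1) ≠ 0` have the same image `[t]`
  have hne : ∀ x : ℂ, (![x, 1] : Fin 2 → ℂ) ≠ 0 := fun x h => by simpa using congrFun h 1
  let pt : ℂ → Projectivization ℂ (Fin 2 → ℂ) := fun x => Projectivization.mk ℂ ![x, 1] (hne x)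
  have hpt : Function.Injective pt := by
    intro x y hxy
    obtain ⟨a, ha⟩ := (Projectivization.mk_eq_mk_iff' ℂ _ _ (hne x) (hne y)).mp hxy
    have h0 := congrFun ha 0
    have h1 := congrFun ha 1
    simp only [Fin.isValue, Pi.smul_apply, Matrix.cons_val_zero, Matrix.cons_val_one, smul_eq_mul,
      mul_one] at h0 h1
    rw [← h0, h1, one_mul]
  have hbad : (pt ⁻¹' S ∪ {x | (aeval ![Polynomial.X, 1] g).IsRoot x}).Finite :=
    (hS.preimage hpt.injOn).union (Polynomial.finite_setOfPred_isRoot (aeval_X_one_ne_zero hg hg0))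
  obtain ⟨x, hx, y, hy, hxy⟩ := hbad.infinite_compl.nontrivial
  simp only [Set.mem_compl_iff, Set.mem_union, Set.mem_preimage, Set.mem_ofPred_eq, not_or,
    Polynomial.IsRoot, eval_aeval_X_one] at hx hy
  obtain ⟨μ, -, hμ⟩ := hinj ![x, 1] ![y, 1] (hne x) (hne y) hx.1 hy.1
    ⟨eval ![y, 1] g / eval ![x, 1] g, div_ne_zero hy.2 hx.2, by
      ext i
      simp only [ImageVec, eval_mul, eval_C, Pi.smul_apply, smul_eq_mul]
      have hx0 : eval ![x, 1] g ≠ 0 := hx.2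
      field_simp⟩
  have h0 := congrFun hμ 0
  have h1 := congrFun hμ 1
  simp only [Fin.isValue, Pi.smul_apply, Matrix.cons_val_zero, Matrix.cons_val_one, smul_eq_mul,
    mul_one] at h0 h1
  exact hxy (by rw [h0, ← h1, one_mul])

namespace Admissible

variable {d : ℕ} {c : Fin 5 → MvPolynomial (Fin 2) ℂ}

theorem isHomogeneous (hc : Admissible d c) (i : Fin 5) : (c i).IsHomogeneous d :=
  mem_VdSub_iff.mp hc.1 i

theorem exists_ne_zero (hc : Admissible d c) : ∃ i, c i ≠ 0 := by
  obtain ⟨i, hi⟩ := Function.ne_iff.mp (hc.2.1 ![1, 0] (by simp))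
  exact ⟨i, fun h => hi (by simp [ImageVec, h])⟩

theorem not_forall_mul_pderiv_eq (hc : Admissible d c) :
    ¬ ∀ i j, c i * pderiv 0 (c j) = c j * pderiv 0 (c i) := by
  intro hW
  obtain ⟨j, hj⟩ := hc.exists_ne_zero
  choose t ht using fun i =>
    exists_eq_C_mul_of_mul_pderiv_eq (hc.isHomogeneous j) (hc.isHomogeneous i) hj (hW i j)
  refine not_genericallyInjective_C_mul (hc.isHomogeneous j) hj t ?_
  convert hc.2.2 using 1
  exact funext fun i => (ht i).symm

theorem eq_zero_of_mul_pderiv_add_mul_pderiv (hc : Admissible d c) (hd : d ≠ 0)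
    {P Q : MvPolynomial (Fin 2) ℂ} (h : ∀ i, P * pderiv 0 (c i) + Q * pderiv 1 (c i) = 0) :
    P = 0 ∧ Q = 0 := by
  have euler : ∀ i,
      X 0 * pderiv 0 (c i) + X 1 * pderiv 1 (c i) = (d : MvPolynomial (Fin 2) ℂ) * c i := fun i => by
    simpa [Fin.sum_univ_two, nsmul_eq_mul] using (hc.isHomogeneous i).sum_X_mul_pderiv
  have key : ∀ i, (X 1 * P - X 0 * Q) * pderiv 0 (c i) =
      -((d : MvPolynomial (Fin 2) ℂ) * Q * c i) := fun i => by
    linear_combination X 1 * h i - Q * euler i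
  by_cases hΔ : X 1 * P - X 0 * Q = 0
  · obtain ⟨i, hi⟩ := hc.exists_ne_zero
    have hQ : Q = 0 := by
      have := key i
      rw [hΔ, zero_mul, eq_comm, neg_eq_zero] at this
      simpa [hd, hi] using this
    refine ⟨?_, hQ⟩
    simpa [hQ, X_ne_zero] using hΔ
  · refine absurd (fun i j => ?_) hc.not_forall_mul_pderiv_eq
    apply mul_left_cancel₀ hΔ
    linear_combination c i * key j - c j * key i

end Admissible

section TangentSpace

variable {d : ℕ} {f : MvPolynomial (Fin 5) ℂ} {c : Fin 5 → MvPolynomial (Fin 2) ℂ}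

theorem Lmap_apply (α : Fin 5 → MvPolynomial (Fin 2) ℂ) :
    Lmap f c α = ∑ i, α i * aeval c (pderiv i f) := rfl

theorem Lmap_mul_left (P : MvPolynomial (Fin 2) ℂ) (α : Fin 5 → MvPolynomial (Fin 2) ℂ) :
    Lmap f c (fun i => P * α i) = P * Lmap f c α := by
  simp only [Lmap_apply, Finset.mul_sum, mul_assoc]

theorem Lmap_pderiv_eq_zero (h0 : aeval c f = 0) (k : Fin 2) :
    Lmap f c (fun i => pderiv k (c i)) = 0 := by
  have := (pderiv k).map_mvPolynomial_aeval c f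
  rw [h0, map_zero] at this
  simp only [Lmap_apply, mul_comm (pderiv k _), this, smul_eq_mul]

theorem mul_mem_Tspace {m n : ℕ} {Y : MvPolynomial (Fin 2) ℂ} {α : Fin 5 → MvPolynomial (Fin 2) ℂ}
    (hY : Y.IsHomogeneous m) (hα : ∀ i, (α i).IsHomogeneous n) (hmn : m + n = d)
    (hL : Lmap f c α = 0) : (fun i => Y * α i) ∈ Tspace d f c :=
  ⟨mem_VdSub_iff.mpr fun i => hmn ▸ hY.mul (hα i), by simp [Lmap_mul_left, hL]⟩

variable (c) in
/-- The tangent vectors `P₀ ∂₀c + P₁ ∂₁c` to the orbit of `c` under reparametrization by `GL₂`,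
the linear forms `P_k = ∑ j, A k j X j` being encoded by `A`. -/
def reparam : (Fin 2 → Fin 2 → ℂ) →ₗ[ℂ] (Fin 5 → MvPolynomial (Fin 2) ℂ) where
  toFun A i := ∑ k, (∑ j, C (A k j) * X j) * pderiv k (c i)
  map_add' A B := by ext i; simp [add_mul, Finset.sum_add_distrib]
  map_smul' r A := by funext i; simp [smul_eq_C_mul]; ring

theorem reparam_apply (A : Fin 2 → Fin 2 → ℂ) (i : Fin 5) :
    reparam c A i = ∑ k, (∑ j, C (A k j) * X j) * pderiv k (c i) := rfl

theorem range_reparam_le (hd : 1 ≤ d) (hc : c ∈ VdSub d) (h0 : aeval c f = 0) :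
    LinearMap.range (reparam c) ≤ Tspace d f c := by
  rintro _ ⟨A, rfl⟩
  have : reparam c A = ∑ k, fun i => (∑ j, C (A k j) * X j) * pderiv k (c i) := by
    ext i
    simp [reparam_apply]
  rw [this]
  refine Submodule.sum_mem _ fun k _ => mul_mem_Tspace (m := 1) (n := d - 1) ?_
    (fun i => (mem_VdSub_iff.mp hc i).pderiv) (by omega) (Lmap_pderiv_eq_zero h0 k)
  exact IsHomogeneous.sum _ _ _ fun j _ => isHomogeneous_C_mul_X _ j

theorem Admissible.reparam_injective (hc : Admissible d c) (hd : d ≠ 0) :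
    Function.Injective (reparam c) := by
  rw [← LinearMap.ker_eq_bot, LinearMap.ker_eq_bot']
  intro A hA
  have h := hc.eq_zero_of_mul_pderiv_add_mul_pderiv hd fun i => by
    simpa [reparam_apply, Fin.sum_univ_two] using congrFun hA i
  ext k j
  have hk : ∑ j, C (A k j) * X j = 0 := by fin_cases k <;> simp [Fin.sum_univ_two, h.1, h.2]
  have hcoeff := congrArg (coeff (Finsupp.single j 1)) hk
  simp only [coeff_sum, coeff_C_mul, coeff_X, Finsupp.single_eq_single_iff] at hcoeff
  fin_cases j <;> simpa using hcoeff

theorem Admissible.range_reparam_eq_Tspace (hc : Admissible d c) (hd : 1 ≤ d)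
    (h0 : aeval c f = 0) (hT : Module.finrank ℂ (Tspace d f c) = 4) :
    LinearMap.range (reparam c) = Tspace d f c := by
  have : FiniteDimensional ℂ (Tspace d f c) := Module.finite_of_finrank_pos (by omega)
  apply Submodule.eq_of_le_of_finrank_eq (range_reparam_le hd hc.1 h0)
  rw [LinearMap.finrank_range_of_inj (hc.reparam_injective (by omega)), hT]
  simp [Module.finrank_pi_fintype]

theorem exists_tangent_eq_vanishingForm_mul {n : ℕ} {φ : Fin 5 → MvPolynomial (Fin 2) ℂ}
    (hφ : ∀ i, (φ i).IsHomogeneous (n + 1)) {v : Fin 2 → ℂ} (hv : v ≠ 0)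
    (hφv : ∀ i, eval v (φ i) = 0) (hφL : Lmap f c φ = 0) :
    ∃ ψ : Fin 5 → MvPolynomial (Fin 2) ℂ, (∀ i, (ψ i).IsHomogeneous n) ∧
      φ = (fun i => vanishingForm v * ψ i) ∧ Lmap f c ψ = 0 := by
  choose ψ hψ hφψ using fun i => (isHomogeneous_vanishingForm v).exists_eq_mul_of_dvd (hφ i)
    (vanishingForm_dvd (hφ i) hv (hφv i))
  refine ⟨ψ, hψ, funext hφψ, ?_⟩
  rw [funext hφψ, Lmap_mul_left] at hφL
  exact (mul_eq_zero.mp hφL).resolve_left (vanishingForm_ne_zero hv)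

end TangentSpace

theorem Admissible.eq_zero_of_eval_pderiv {d : ℕ} {f : MvPolynomial (Fin 5) ℂ}
    {c : Fin 5 → MvPolynomial (Fin 2) ℂ} (hc : Admissible d c) (hd : 1 ≤ d) (h0 : aeval c f = 0)
    (hT : Module.finrank ℂ (Tspace d f c) = 4) {v : Fin 2 → ℂ} (hv : v ≠ 0) {a b : ℂ}
    (hab : ∀ i, a * eval v (pderiv 0 (c i)) + b * eval v (pderiv 1 (c i)) = 0) :
    a = 0 ∧ b = 0 := by
  set φ : Fin 5 → MvPolynomial (Fin 2) ℂ := fun i => C a * pderiv 0 (c i) + C b * pderiv 1 (c i)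
  have hφ : ∀ i, (φ i).IsHomogeneous (d - 1) := fun i =>
    ((hc.isHomogeneous i).pderiv.C_mul a).add ((hc.isHomogeneous i).pderiv.C_mul b)
  have hφv : ∀ i, eval v (φ i) = 0 := by simpa [φ] using hab
  obtain rfl | ⟨n, rfl⟩ : d = 1 ∨ ∃ n, d = n + 2 := by
    rcases Nat.exists_eq_add_of_le' hd with ⟨_ | n, rfl⟩ <;> simp
  · simpa using hc.eq_zero_of_mul_pderiv_add_mul_pderiv one_ne_zero fun i =>
      (hφ i).eq_zero_of_eval_eq_zero (hφv i)
  have hφL : Lmap f c φ = 0 := by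
    have : φ = a • (fun i => pderiv 0 (c i)) + b • (fun i => pderiv 1 (c i)) := by
      ext1 i; simp [φ, smul_eq_C_mul]
    simp [this, Lmap_pderiv_eq_zero h0]
  obtain ⟨ψ, hψ, hφψ, hψL⟩ := exists_tangent_eq_vanishingForm_mul hφ hv hφv hφL
  obtain ⟨j, hj⟩ := Function.ne_iff.mp hv
  obtain ⟨A, hA⟩ : (fun i => X j ^ 2 * ψ i) ∈ LinearMap.range (reparam c) := by
    rw [hc.range_reparam_eq_Tspace hd h0 hT]
    exact mul_mem_Tspace (isHomogeneous_X_pow j 2) hψ (add_comm 2 n) hψL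
  have hrel := hc.eq_zero_of_mul_pderiv_add_mul_pderiv (by omega)
    (P := X j ^ 2 * C a - vanishingForm v * ∑ k, C (A 0 k) * X k)
    (Q := X j ^ 2 * C b - vanishingForm v * ∑ k, C (A 1 k) * X k) fun i => by
      have hAi := congrFun hA i
      simp only [reparam_apply, Fin.sum_univ_two] at hAi ⊢
      linear_combination X j ^ 2 * congrFun hφψ i - vanishingForm v * hAi
  have hvj : v j ^ 2 ≠ 0 := pow_ne_zero 2 hj
  exact ⟨by simpa [hvj] using congrArg (eval v) hrel.1,
    by simpa [hvj] using congrArg (eval v) hrel.2⟩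

theorem statement6_general (d : ℕ) (hd : 1 ≤ d) (f₀ : MvPolynomial (Fin 5) ℂ)
    (c : Fin 5 → MvPolynomial (Fin 2) ℂ) (hadm : Admissible d c)
    (h0 : aeval c f₀ = 0)
    (hT : Module.finrank ℂ ↥(Tspace d f₀ c) = 4) :
    IsImmersion c := by
  intro v hv
  rw [LinearIndependent.pair_iff]
  intro a b hab
  exact hadm.eq_zero_of_eval_pderiv hd h0 hT hv fun i => by simpa using congrFun hab i

/-- Let `f₀` be a quintic form with smooth zero locus (the partial
derivatives `∂f₀/∂z_i` have no common zero in `ℂ⁵` except the origin). If `c ∈ V_d` is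
admissible with `f₀∘c = 0` and `dim T(f₀,c) = 4`, then `c` is an immersion. -/
theorem statement6 (d : ℕ) (hd : 1 ≤ d) (f₀ : MvPolynomial (Fin 5) ℂ) (hf₀ : IsQuintic f₀)
    (hsmooth : ∀ z : Fin 5 → ℂ, (∀ i, eval z (pderiv i f₀) = 0) → z = 0)
    (c : Fin 5 → MvPolynomial (Fin 2) ℂ) (hadm : Admissible d c)
    (h0 : aeval c f₀ = 0)
    (hT : Module.finrank ℂ ↥(Tspace d f₀ c) = 4) :
    IsImmersion c :=
  statement6_general d hd f₀ c hadm h0 hT
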